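/- arXiv:1702.06189 — 3 statements merged into one kernel-verified Lean document; each statement's English description precedes it below -/
import Mathlib

section
/- Let F(x) = (α/N) x(x-1)[2u((-k+3-2/k)x - 1 + 1/k) + (λ+u)(k-1)] with α, N, u > 0, integer k ≥ 3, and let x̃ = λ/(2u(1-2/k)) + 1/2. If 0 < x̃ < 1, then F'(x̃) > 0; i.e., the interior equilibrium x̃ is never locally asymptotically stable when it lies in the open interval (0,1). -/
/-!
`F` is a positive multiple of `x (x - 1) L(x)` with `L` affine, and `x̃` is exactly the root of `L`.
Hence `F'(x̃) = (α/N) x̃ (x̃ - 1) L'`, a product of the negative number `x̃ (x̃ - 1)` with the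
slope `L' = 2u(-k + 3 - 2/k) = -2u(k - 1)(k - 2)/k`, which is negative for `k ≥ 3`.
-/

theorem HasDerivAt.mul_of_right_eq_zero {𝕜 : Type*} [NontriviallyNormedField 𝕜] {f g : 𝕜 → 𝕜}
    {g' x : 𝕜} (hf : DifferentiableAt 𝕜 f x) (hg : HasDerivAt g g' x) (hgx : g x = 0) :
    HasDerivAt (fun y => f y * g y) (f x * g') x := by
  have h := hf.hasDerivAt.mul hg
  rwa [hgx, mul_zero, zero_add] at h

theorem neg_add_three_sub_two_div_neg {k : ℝ} (hk : 2 < k) : -k + 3 - 2 / k < 0 := by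
  have hk0 : k ≠ 0 := by positivity
  have hfactor : -k + 3 - 2 / k = -((k - 1) * (k - 2) / k) := by
    field_simp
    ring
  rw [hfactor, neg_lt_zero]
  exact div_pos (mul_pos (by linarith) (by linarith)) (by linarith)

theorem linear_factor_eq_zero_at_interior_root {u lam k : ℝ} (hu : u ≠ 0) (hk0 : k ≠ 0)
    (hk2 : k ≠ 2) :
    2 * u * ((-k + 3 - 2 / k) * (lam / (2 * u * (1 - 2 / k)) + 1 / 2) - 1 + 1 / k)
      + (lam + u) * (k - 1) = 0 := by
  have hk2' : k - 2 ≠ 0 := sub_ne_zero.mpr hk2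
  have hden : 1 - 2 / k = (k - 2) / k := by field_simp
  rw [hden]
  field_simp
  ring

theorem hasDerivAt_linear_factor (u lam m k x : ℝ) :
    HasDerivAt (fun y => 2 * u * (m * y - 1 + 1 / k) + (lam + u) * (k - 1)) (2 * u * m) x := by
  simpa using ((((hasDerivAt_id x).const_mul m).sub_const 1).add_const (1 / k)).const_mul (2 * u)
    |>.add_const ((lam + u) * (k - 1))

/-- The interior equilibrium `x̃ = λ/(2u(1-2/k)) + 1/2` of the mean-field dynamics
is never locally asymptotically stable: if `0 < x̃ < 1` then `F'(x̃) > 0`. -/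
theorem interior_equilibrium_unstable
    (α N u lam : ℝ) (hα : 0 < α) (hN : 0 < N) (hu : 0 < u)
    (k : ℕ) (hk : 3 ≤ k)
    (F : ℝ → ℝ)
    (hF : F = fun x => (α / N) * x * (x - 1) *
      (2 * u * ((-(k : ℝ) + 3 - 2 / (k : ℝ)) * x - 1 + 1 / (k : ℝ))
        + (lam + u) * ((k : ℝ) - 1)))
    (xt : ℝ) (hxt : xt = lam / (2 * u * (1 - 2 / (k : ℝ))) + 1 / 2)
    (h0 : 0 < xt) (h1 : xt < 1) :
    0 < deriv F xt := by
  have hk2 : (2 : ℝ) < k := by exact_mod_cast hk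
  have hroot : 2 * u * ((-(k : ℝ) + 3 - 2 / k) * xt - 1 + 1 / k) + (lam + u) * (k - 1) = 0 := by
    rw [hxt]
    exact linear_factor_eq_zero_at_interior_root hu.ne' (by positivity) hk2.ne'
  have hD := HasDerivAt.mul_of_right_eq_zero (f := fun x => α / N * x * (x - 1))
    (by fun_prop) (hasDerivAt_linear_factor u lam _ k xt) hroot
  rw [hF, hD.deriv]
  have hquad : α / N * xt * (xt - 1) < 0 :=
    mul_neg_of_pos_of_neg (by positivity) (by linarith)
  have hslope : 2 * u * (-(k : ℝ) + 3 - 2 / k) < 0 :=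
    mul_neg_of_pos_of_neg (by positivity) (neg_add_three_sub_two_div_neg hk2)
  exact mul_pos_of_neg_of_neg hquad hslope
end

section
/- Under the dynamics ẋ = F(x) with F(x) = (α/N) x(x-1)[2u((-k+3-2/k)x - 1 + 1/k) + (λ+u)(k-1)], α, N, u > 0, integer k ≥ 3, and initial condition x(0) = 1/2: if λ > 0 then the solution x(t) is nonincreasing and converges to 0 as t → ∞, and if λ < 0 then x(t) is nondecreasing and converges to 1. -/
open Filter

/-- If the vector field is negative at a barrier `b` and the solution starts
at or below `b`, it stays at or below `b` for all `t ≥ 0`. -/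
lemma barrier_le (F f : ℝ → ℝ) (b : ℝ)
    (hode : ∀ t, HasDerivAt f (F (f t)) t)
    (hb : F b < 0) (h0 : f 0 ≤ b) :
    ∀ t ≥ (0:ℝ), f t ≤ b := by
  have hdiff : Differentiable ℝ f := fun t => (hode t).differentiableAt
  have hcont : Continuous f := hdiff.continuous
  intro t ht
  by_contra hcon
  push_neg at hcon
  have ht0 : 0 < t := by
    rcases ht.lt_or_eq with h | h
    · exact h
    · exfalso; rw [← h] at hcon; linarith
  set S : Set ℝ := Set.Icc 0 t ∩ f ⁻¹' Set.Iic b with hSdef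
  have hSclosed : IsClosed S :=
    isClosed_Icc.inter (isClosed_Iic.preimage hcont)
  have hS0 : (0:ℝ) ∈ S := ⟨⟨le_rfl, ht⟩, h0⟩
  have hSbdd : BddAbove S := BddAbove.mono Set.inter_subset_left bddAbove_Icc
  set t₀ := sSup S with ht₀def
  have ht₀S : t₀ ∈ S := hSclosed.csSup_mem ⟨0, hS0⟩ hSbdd
  have hft₀ : f t₀ ≤ b := ht₀S.2
  have ht₀0 : 0 ≤ t₀ := ht₀S.1.1
  have ht₀lt : t₀ < t := by
    rcases ht₀S.1.2.lt_or_eq with h | h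
    · exact h
    · exfalso; rw [h] at hft₀; linarith
  have hafter : ∀ s, t₀ < s → s ≤ t → b < f s := by
    intro s hs1 hs2
    by_contra h
    push_neg at h
    have hmem : s ∈ S := ⟨⟨le_trans ht₀0 hs1.le, hs2⟩, h⟩
    exact absurd (le_csSup hSbdd hmem) (not_le.2 hs1)
  have key : ∀ᶠ s in nhdsWithin t₀ (Set.Ioi t₀), f s < b := by
    rcases hft₀.lt_or_eq with hlt | heq
    · have hopen : IsOpen {s : ℝ | f s < b} := isOpen_lt hcont continuous_const
      exact mem_nhdsWithin_of_mem_nhds (hopen.mem_nhds hlt)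
    · have hd : HasDerivAt f (F b) t₀ := by
        have := hode t₀; rwa [heq] at this
      have hs := hasDerivAt_iff_tendsto_slope.mp hd
      have hev : ∀ᶠ s in nhdsWithin t₀ {t₀}ᶜ, slope f t₀ s < 0 :=
        hs (Iio_mem_nhds hb)
      have hmono : nhdsWithin t₀ (Set.Ioi t₀) ≤ nhdsWithin t₀ {t₀}ᶜ :=
        nhdsWithin_mono t₀ (fun x hx => (hx : t₀ < x).ne')
      filter_upwards [hev.filter_mono hmono, self_mem_nhdsWithin] with s hs1 hs2
      rw [slope_def_field] at hs1
      have hd0 : (0:ℝ) < s - t₀ := sub_pos.mpr hs2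
      rcases div_neg_iff.mp hs1 with ⟨h1, h2⟩ | ⟨h1, h2⟩
      · linarith
      · linarith [heq ▸ (by linarith [h1] : f s < f t₀)]
  have hIoc : ∀ᶠ s in nhdsWithin t₀ (Set.Ioi t₀), s ∈ Set.Ioc t₀ t :=
    Ioc_mem_nhdsGT_of_mem ⟨le_refl t₀, ht₀lt⟩
  obtain ⟨s, hs1, hs2⟩ := (key.and hIoc).exists
  exact absurd hs1 (not_lt.2 (hafter s hs2.1 hs2.2).le)

/-- If the vector field is positive strictly below a barrier `b` and the
solution starts at or above `b`, it stays at or above `b` for all `t ≥ 0`. -/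
lemma barrier_ge (F f : ℝ → ℝ) (b : ℝ)
    (hode : ∀ t, HasDerivAt f (F (f t)) t)
    (hb : ∀ x, x < b → 0 < F x) (h0 : b ≤ f 0) :
    ∀ t ≥ (0:ℝ), b ≤ f t := by
  have hdiff : Differentiable ℝ f := fun t => (hode t).differentiableAt
  have hcont : Continuous f := hdiff.continuous
  intro t ht
  by_contra hcon
  push_neg at hcon
  have ht0 : 0 < t := by
    rcases ht.lt_or_eq with h | h
    · exact h
    · exfalso; rw [← h] at hcon; linarith
  set S : Set ℝ := Set.Icc 0 t ∩ f ⁻¹' Set.Ici b with hSdef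
  have hSclosed : IsClosed S :=
    isClosed_Icc.inter (isClosed_Ici.preimage hcont)
  have hS0 : (0:ℝ) ∈ S := ⟨⟨le_rfl, ht⟩, h0⟩
  have hSbdd : BddAbove S := BddAbove.mono Set.inter_subset_left bddAbove_Icc
  set t₀ := sSup S with ht₀def
  have ht₀S : t₀ ∈ S := hSclosed.csSup_mem ⟨0, hS0⟩ hSbdd
  have hft₀ : b ≤ f t₀ := ht₀S.2
  have ht₀0 : 0 ≤ t₀ := ht₀S.1.1
  have ht₀lt : t₀ < t := by
    rcases ht₀S.1.2.lt_or_eq with h | h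
    · exact h
    · exfalso; rw [h] at hft₀; linarith
  have hafter : ∀ s, t₀ < s → s ≤ t → f s < b := by
    intro s hs1 hs2
    by_contra h
    push_neg at h
    have hmem : s ∈ S := ⟨⟨le_trans ht₀0 hs1.le, hs2⟩, h⟩
    exact absurd (le_csSup hSbdd hmem) (not_le.2 hs1)
  have hmono : StrictMonoOn f (Set.Icc t₀ t) := by
    apply strictMonoOn_of_deriv_pos (convex_Icc t₀ t) hcont.continuousOn
    intro s hs
    rw [interior_Icc] at hs
    rw [(hode s).deriv]
    exact hb _ (hafter s hs.1 hs.2.le)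
  have : f t₀ < f t :=
    hmono ⟨le_refl t₀, ht₀lt.le⟩ ⟨ht₀lt.le, le_refl t⟩ ht₀lt
  linarith

/-- Master lemma: for a continuous field vanishing at `0`, negative on
`(0, 1/2]` and positive on `(-∞, 0)`, a solution started at `1/2` is
nonincreasing on `t ≥ 0` and tends to `0`. -/
lemma master_dyn (F : ℝ → ℝ) (hFc : Continuous F) (hF0 : F 0 = 0)
    (hFneg : ∀ x, 0 < x → x ≤ 1/2 → F x < 0)
    (hFpos : ∀ x, x < 0 → 0 < F x)
    (f : ℝ → ℝ) (hode : ∀ t, HasDerivAt f (F (f t)) t) (h0 : f 0 = 1 / 2) :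
    AntitoneOn f (Set.Ici 0) ∧ Tendsto f atTop (nhds 0) := by
  have hdiff : Differentiable ℝ f := fun t => (hode t).differentiableAt
  have hcont : Continuous f := hdiff.continuous
  have hhalf : F (1/2) < 0 := hFneg _ (by norm_num) le_rfl
  have upper : ∀ t ≥ (0:ℝ), f t ≤ 1/2 :=
    barrier_le F f _ hode hhalf (le_of_eq h0)
  have lower : ∀ t ≥ (0:ℝ), 0 ≤ f t :=
    barrier_ge F f 0 hode hFpos (by rw [h0]; norm_num)
  have hFle : ∀ t ≥ (0:ℝ), F (f t) ≤ 0 := by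
    intro t ht
    rcases (lower t ht).lt_or_eq with h | h
    · exact (hFneg _ h (upper t ht)).le
    · rw [← h, hF0]
  have anti : AntitoneOn f (Set.Ici 0) := by
    apply antitoneOn_of_deriv_nonpos (convex_Ici 0) hcont.continuousOn
    · intro s _
      exact (hode s).differentiableAt.differentiableWithinAt
    · intro s hs
      rw [interior_Ici] at hs
      rw [(hode s).deriv]
      exact hFle s hs.le
  refine ⟨anti, ?_⟩
  set g : ℝ → ℝ := fun t => f (max t 0) with hgdef
  have hganti : Antitone g := fun s t hst =>
    anti (le_max_right s 0) (le_max_right t 0) (max_le_max hst le_rfl)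
  have hgbdd : BddBelow (Set.range g) := by
    refine ⟨0, ?_⟩
    rintro y ⟨t, rfl⟩
    exact lower _ (le_max_right t 0)
  have hLtend := tendsto_atTop_ciInf hganti hgbdd
  set L := ⨅ t, g t with hLdef
  have hfg : ∀ t ≥ (0:ℝ), g t = f t := by
    intro t ht
    simp only [hgdef, max_eq_left ht]
  have hftend : Tendsto f atTop (nhds L) := by
    refine hLtend.congr' ?_
    filter_upwards [eventually_ge_atTop (0:ℝ)] with t ht
    exact hfg t ht
  have hLge : 0 ≤ L := le_ciInf fun t => lower _ (le_max_right t 0)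
  have hLle : L ≤ 1/2 := by
    have h := ciInf_le hgbdd (0:ℝ)
    have : g 0 = 1/2 := by simp [hgdef, h0]
    linarith
  rcases hLge.lt_or_eq with hLpos | hLzero
  · exfalso
    have hFL : F L < 0 := hFneg L hLpos hLle
    have hcomp : Tendsto (fun t => F (f t)) atTop (nhds (F L)) :=
      (hFc.tendsto L).comp hftend
    have hev : ∀ᶠ t in atTop, F (f t) < F L / 2 :=
      hcomp.eventually_lt_const (by linarith)
    obtain ⟨T, hT⟩ := eventually_atTop.mp (hev.and (eventually_ge_atTop (0:ℝ)))
    have hT0 : (0:ℝ) ≤ T := (hT T le_rfl).2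
    have hanti2 : AntitoneOn (fun t => f t - F L / 2 * t) (Set.Ici T) := by
      apply antitoneOn_of_deriv_nonpos (convex_Ici T)
      · exact (hcont.sub (continuous_const.mul continuous_id)).continuousOn
      · intro s _
        exact ((hode s).sub ((hasDerivAt_id s).const_mul (F L / 2))).differentiableAt.differentiableWithinAt
      · intro s hs
        rw [interior_Ici] at hs
        have hd : HasDerivAt (fun t => f t - F L / 2 * t) (F (f s) - F L / 2 * 1) s :=
          (hode s).sub ((hasDerivAt_id s).const_mul (F L / 2))
        rw [hd.deriv]
        have := (hT s hs.le).1
        linarith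
    set tt := T + (f T + 1) / (-(F L / 2)) with httdef
    have hden : (0:ℝ) < -(F L / 2) := by linarith
    have hfT0 : 0 ≤ f T := lower T hT0
    have httT : T ≤ tt := by
      have : 0 < (f T + 1) / (-(F L / 2)) := div_pos (by linarith) hden
      rw [httdef]; linarith
    have hineq := hanti2 Set.self_mem_Ici (Set.mem_Ici.mpr httT) httT
    simp only at hineq
    have hFLne : F L ≠ 0 := ne_of_lt hFL
    have hmul : F L / 2 * ((f T + 1) / (-(F L / 2))) = -(f T + 1) := by
      field_simp
    have hexp : F L / 2 * tt = F L / 2 * T - (f T + 1) := by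
      rw [httdef, mul_add, hmul]; ring
    have hftt : 0 ≤ f tt := lower tt (le_trans hT0 httT)
    linarith
  · rw [← hLzero] at hftend
    exact hftend

/-- Convergence of the mean-field population dynamics `ẋ = F(x)` started at
`x(0) = 1/2`: if `λ > 0` the solution is nonincreasing (on `t ≥ 0`) and tends to
`0`; if `λ < 0` it is nondecreasing and tends to `1`. -/
theorem convergence_from_half
    (α N u lam : ℝ) (hα : 0 < α) (hN : 0 < N) (hu : 0 < u)
    (k : ℕ) (hk : 3 ≤ k)
    (F : ℝ → ℝ)
    (hF : F = fun x => (α / N) * x * (x - 1) *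
      (2 * u * ((-(k : ℝ) + 3 - 2 / (k : ℝ)) * x - 1 + 1 / (k : ℝ))
        + (lam + u) * ((k : ℝ) - 1)))
    (f : ℝ → ℝ) (hode : ∀ t, HasDerivAt f (F (f t)) t) (h0 : f 0 = 1 / 2) :
    (0 < lam → AntitoneOn f (Set.Ici 0) ∧ Tendsto f atTop (nhds 0)) ∧
    (lam < 0 → MonotoneOn f (Set.Ici 0) ∧ Tendsto f atTop (nhds 1)) := by
  have hkr : (3:ℝ) ≤ (k:ℝ) := by exact_mod_cast hk
  have hk0 : (0:ℝ) < (k:ℝ) := by linarith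
  have hαN : 0 < α / N := div_pos hα hN
  -- decomposition of the affine factor
  have hgdecomp : ∀ x : ℝ,
      2 * u * ((-(k : ℝ) + 3 - 2 / (k : ℝ)) * x - 1 + 1 / (k : ℝ))
        + (lam + u) * ((k : ℝ) - 1)
      = lam * ((k:ℝ) - 1) + (2 * u * ((k:ℝ) - 3 + 2 / (k:ℝ))) * (1/2 - x) := by
    intro x
    field_simp
    ring
  have hB : 0 ≤ 2 * u * ((k:ℝ) - 3 + 2 / (k:ℝ)) := by
    have h2k : 0 < 2 / (k:ℝ) := by positivity
    have : 0 ≤ (k:ℝ) - 3 + 2/(k:ℝ) := by linarith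
    positivity
  have hFc : Continuous F := by
    rw [hF]; fun_prop
  constructor
  · -- λ > 0
    intro hlam
    have hF0 : F 0 = 0 := by rw [hF]; norm_num
    have hgpos : ∀ x : ℝ, x ≤ 1/2 →
        0 < 2 * u * ((-(k : ℝ) + 3 - 2 / (k : ℝ)) * x - 1 + 1 / (k : ℝ))
          + (lam + u) * ((k : ℝ) - 1) := by
      intro x hx
      rw [hgdecomp x]
      have h1 : 0 < lam * ((k:ℝ) - 1) := by
        apply mul_pos hlam; linarith
      have h2 : 0 ≤ (2 * u * ((k:ℝ) - 3 + 2 / (k:ℝ))) * (1/2 - x) :=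
        mul_nonneg hB (by linarith)
      linarith
    have hFneg : ∀ x, 0 < x → x ≤ 1/2 → F x < 0 := by
      intro x hx hx2
      rw [hF]
      have h1 : α / N * x > 0 := mul_pos hαN hx
      have h2 : α / N * x * (x - 1) < 0 := mul_neg_of_pos_of_neg h1 (by linarith)
      exact mul_neg_of_neg_of_pos h2 (hgpos x hx2)
    have hFpos : ∀ x, x < 0 → 0 < F x := by
      intro x hx
      rw [hF]
      have h1 : α / N * x < 0 := mul_neg_of_pos_of_neg hαN hx
      have h2 : 0 < α / N * x * (x - 1) := mul_pos_of_neg_of_neg h1 (by linarith)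
      exact mul_pos h2 (hgpos x (by linarith))
    exact master_dyn F hFc hF0 hFneg hFpos f hode h0
  · -- λ < 0 : apply master lemma to 1 - f with field y ↦ -F (1 - y)
    intro hlam
    have hgneg : ∀ x : ℝ, 1/2 ≤ x →
        2 * u * ((-(k : ℝ) + 3 - 2 / (k : ℝ)) * x - 1 + 1 / (k : ℝ))
          + (lam + u) * ((k : ℝ) - 1) < 0 := by
      intro x hx
      rw [hgdecomp x]
      have h1 : lam * ((k:ℝ) - 1) < 0 :=
        mul_neg_of_neg_of_pos hlam (by linarith)
      have h2 : (2 * u * ((k:ℝ) - 3 + 2 / (k:ℝ))) * (1/2 - x) ≤ 0 :=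
        mul_nonpos_of_nonneg_of_nonpos hB (by linarith)
      linarith
    have hFposMid : ∀ x, 1/2 ≤ x → x < 1 → 0 < F x := by
      intro x hx1 hx2
      rw [hF]
      have h1 : α / N * x > 0 := mul_pos hαN (by linarith)
      have h2 : α / N * x * (x - 1) < 0 := mul_neg_of_pos_of_neg h1 (by linarith)
      exact mul_pos_of_neg_of_neg h2 (hgneg x hx1)
    have hFnegHigh : ∀ x, 1 < x → F x < 0 := by
      intro x hx
      rw [hF]
      have h1 : α / N * x > 0 := mul_pos hαN (by linarith)
      have h2 : 0 < α / N * x * (x - 1) := mul_pos h1 (by linarith)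
      exact mul_neg_of_pos_of_neg h2 (hgneg x (by linarith))
    set G : ℝ → ℝ := fun y => -F (1 - y) with hGdef
    have hGc : Continuous G := (hFc.comp (continuous_const.sub continuous_id)).neg
    have hG0 : G 0 = 0 := by
      simp only [hGdef, sub_zero, hF]
      norm_num
    have hGneg : ∀ y, 0 < y → y ≤ 1/2 → G y < 0 := by
      intro y hy1 hy2
      simp only [hGdef, neg_neg, neg_lt_zero]
      exact hFposMid (1 - y) (by linarith) (by linarith)
    have hGpos : ∀ y, y < 0 → 0 < G y := by
      intro y hy
      simp only [hGdef]
      have := hFnegHigh (1 - y) (by linarith)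
      linarith
    have hode' : ∀ t, HasDerivAt (fun s => 1 - f s) (G ((fun s => 1 - f s) t)) t := by
      intro t
      have h1 : HasDerivAt (fun s => 1 - f s) (-(F (f t))) t := (hode t).const_sub 1
      have h2 : G (1 - f t) = -(F (f t)) := by
        simp only [hGdef, sub_sub_cancel]
      simpa [h2] using h1
    have h0' : (fun s => 1 - f s) 0 = 1 / 2 := by
      simp [h0]; norm_num
    obtain ⟨hanti, htend⟩ := master_dyn G hGc hG0 hGneg hGpos (fun s => 1 - f s) hode' h0'
    constructor
    · intro a ha b hb hab
      have := hanti ha hb hab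
      simp only at this
      linarith
    · have h1 : Tendsto (fun t => 1 - (1 - f t)) atTop (nhds (1 - 0)) :=
        tendsto_const_nhds.sub htend
      simpa using h1
end

section
/- For k ≥ 3, u > 0, if |λ| < u(1 - 2/k) then the interior equilibrium x̃ = λ/(2u(1-2/k)) + 1/2 lies strictly in (0,1), and the dynamics ẋ = F(x) restricted to [0,1] has x̃ as an unstable equilibrium separating the basins of attraction of the two stable equilibria 0 and 1: solutions with x(0) ∈ (x̃, 1) converge to 1 and solutions with x(0) ∈ (0, x̃) converge to 0. -/
open Filter

/-! Since `-A xt = B` for the bracket `A x + B`, one has `F x = κ x (1 - x) (x - xt)` with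
`κ = (α/N) 2u(k-1)(1-2/k) > 0`: the zeros are `0 < xt < 1`, `F < 0` on `(0, xt)` and `F > 0`
on `(xt, 1)`. As `F` is locally Lipschitz, uniqueness forbids a non-constant solution from
reaching a zero of `F`, so a solution started between two consecutive zeros stays between them
and is monotone. An increasing solution cannot converge to a point `L` with `F L > 0`, since it
would eventually move at speed at least `F L / 2` forever; so it converges to the upper zero.
The decreasing case follows by reflecting `x ↦ -x`. -/

open Set Topology

section PhaseLine

variable {F f : ℝ → ℝ}

theorem eq_of_apply_eq_of_hasDerivAt (hF : LocallyLipschitz F) {c : ℝ} (hc : F c = 0)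
    (hf : ∀ t, HasDerivAt f (F (f t)) t) {T : ℝ} (hT : f T = c) (t : ℝ) : f t = c := by
  have hfc : Continuous f := continuous_iff_continuousAt.2 fun t => (hf t).continuousAt
  -- `{t | f t = c}` is closed, and open by local uniqueness against the constant solution `c`.
  have hopen : IsOpen {t | f t = c} := by
    refine isOpen_iff_mem_nhds.2 fun t₀ (ht₀ : f t₀ = c) => ?_
    obtain ⟨K, U, hU, hlip⟩ := hF c
    have hfU : ∀ᶠ t in 𝓝 t₀, f t ∈ U := hfc.continuousAt.preimage_mem_nhds (ht₀ ▸ hU)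
    exact ODE_solution_unique_of_eventually (v := fun _ => F) (s := fun _ => U)
      (g := fun _ => c) (Eventually.of_forall fun _ => hlip)
      (hfU.mono fun t ht => ⟨hf t, ht⟩)
      (Eventually.of_forall fun t => ⟨hc ▸ hasDerivAt_const t c, mem_of_mem_nhds hU⟩) ht₀
  have hclopen : IsClopen {t | f t = c} := ⟨isClosed_eq hfc continuous_const, hopen⟩
  exact eq_univ_iff_forall.1 (hclopen.eq_univ ⟨T, hT⟩) t

theorem mem_Ioo_of_hasDerivAt (hF : LocallyLipschitz F) {a b : ℝ} (ha : F a = 0) (hb : F b = 0)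
    (hf : ∀ t, HasDerivAt f (F (f t)) t) (h0 : f 0 ∈ Ioo a b) (t : ℝ) : f t ∈ Ioo a b := by
  have hconn : IsPreconnected (range f) :=
    isPreconnected_range (continuous_iff_continuousAt.2 fun t => (hf t).continuousAt)
  have hne : ∀ {c}, F c = 0 → c ∈ range f → f 0 = c := fun hc ⟨T, hT⟩ =>
    eq_of_apply_eq_of_hasDerivAt hF hc hf hT 0
  refine ⟨lt_of_not_ge fun hta => ?_, lt_of_not_ge fun hbt => ?_⟩
  · exact h0.1.ne' <| hne ha <|
      hconn.Icc_subset (mem_range_self t) (mem_range_self 0) ⟨hta, h0.1.le⟩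
  · exact h0.2.ne <| hne hb <|
      hconn.Icc_subset (mem_range_self 0) (mem_range_self t) ⟨h0.2.le, hbt⟩

theorem hasDerivAt_neg_of_hasDerivAt (hf : ∀ t, HasDerivAt f (F (f t)) t) (t : ℝ) :
    HasDerivAt (-f) ((fun y => -F (-y)) ((-f) t)) t := by
  simpa using (hf t).neg

theorem apply_nonpos_of_tendsto (hf : ∀ t, HasDerivAt f (F (f t)) t) {L : ℝ}
    (hFL : ContinuousAt F L) (hL : Tendsto f atTop (𝓝 L)) : F L ≤ 0 := by
  by_contra! hpos
  obtain ⟨T, hT⟩ := eventually_atTop.1 <|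
    (hFL.tendsto.comp hL).eventually (lt_mem_nhds (half_lt_self hpos))
  -- past `T` the solution grows at least linearly, so it cannot converge.
  have hgrow : ∀ t ≥ T, F L / 2 * (t - T) ≤ f t - f T := by
    intro t ht
    refine (convex_Ici T).mul_sub_le_image_sub_of_le_deriv
      (fun s _ => (hf s).continuousAt.continuousWithinAt)
      (fun s _ => (hf s).differentiableAt.differentiableWithinAt)
      (fun s hs => ?_) T self_mem_Ici t ht ht
    rw [interior_Ici] at hs
    exact (hf s).deriv ▸ (hT s (le_of_lt hs)).le
  have hlin : Tendsto (fun t => f T + F L / 2 * (t - T)) atTop atTop :=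
    tendsto_atTop_add_const_left _ _ <|
      (tendsto_atTop_add_const_right _ _ tendsto_id).const_mul_atTop (half_pos hpos)
  refine not_tendsto_nhds_of_tendsto_atTop ?_ L hL
  exact tendsto_atTop_mono' _
    (eventually_atTop.2 ⟨T, fun t ht => by linarith [hgrow t ht]⟩) hlin

theorem tendsto_right_of_pos_on_Ioo (hF : LocallyLipschitz F) {a b : ℝ} (ha : F a = 0)
    (hb : F b = 0) (hpos : ∀ x ∈ Ioo a b, 0 < F x) (hf : ∀ t, HasDerivAt f (F (f t)) t)
    (h0 : f 0 ∈ Ioo a b) : Tendsto f atTop (𝓝 b) := by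
  have hmem := mem_Ioo_of_hasDerivAt hF ha hb hf h0
  have hmono : Monotone f :=
    monotone_of_deriv_nonneg (fun t => (hf t).differentiableAt)
      fun t => (hf t).deriv ▸ (hpos _ (hmem t)).le
  have hbdd : BddAbove (range f) := ⟨b, forall_mem_range.2 fun t => (hmem t).2.le⟩
  have hlim := tendsto_atTop_ciSup hmono hbdd
  have hsup_le : ⨆ t, f t ≤ b := ciSup_le fun t => (hmem t).2.le
  have hlt_sup : a < ⨆ t, f t := h0.1.trans_le (le_ciSup hbdd 0)
  have hFsup := apply_nonpos_of_tendsto hf hF.continuous.continuousAt hlim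
  obtain hsup | hsup := hsup_le.lt_or_eq
  · exact absurd hFsup (hpos _ ⟨hlt_sup, hsup⟩).not_ge
  · exact hsup ▸ hlim

theorem tendsto_left_of_neg_on_Ioo (hF : LocallyLipschitz F) {a b : ℝ} (ha : F a = 0)
    (hb : F b = 0) (hneg : ∀ x ∈ Ioo a b, F x < 0) (hf : ∀ t, HasDerivAt f (F (f t)) t)
    (h0 : f 0 ∈ Ioo a b) : Tendsto f atTop (𝓝 a) := by
  have hneg_lip : LocallyLipschitz (fun y : ℝ => -y) := LipschitzWith.id.neg.locallyLipschitz
  have hlim := tendsto_right_of_pos_on_Ioo (hneg_lip.comp (hF.comp hneg_lip))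
    (a := -b) (b := -a) (by simpa using hb) (by simpa using ha)
    (fun y hy => neg_pos.2 (hneg (-y) ⟨lt_neg_of_lt_neg hy.2, neg_lt_of_neg_lt hy.1⟩))
    (hasDerivAt_neg_of_hasDerivAt hf) (by simpa [and_comm] using h0)
  simpa using hlim.neg

end PhaseLine

theorem hasDerivAt_cubic_at_root (κ c : ℝ) :
    HasDerivAt (fun x => κ * x * (1 - x) * (x - c)) (κ * c * (1 - c)) c := by
  have h := (((hasDerivAt_id' c).const_mul κ).fun_mul ((hasDerivAt_id' c).const_sub 1)).fun_mul
    ((hasDerivAt_id' c).sub_const c)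
  simpa using h

theorem bistable_of_eq_cubic {κ c : ℝ} (hκ : 0 < κ) (hc : c ∈ Ioo 0 1) {F : ℝ → ℝ}
    (hF : F = fun x => κ * x * (1 - x) * (x - c)) :
    F c = 0 ∧ 0 < deriv F c ∧
    (∀ f : ℝ → ℝ, (∀ t, HasDerivAt f (F (f t)) t) →
      (f 0 ∈ Ioo c 1 → Tendsto f atTop (𝓝 1)) ∧
      (f 0 ∈ Ioo 0 c → Tendsto f atTop (𝓝 0))) := by
  obtain ⟨hc0, hc1⟩ := hc
  have hlip : LocallyLipschitz F := ContDiff.locallyLipschitz (𝕂 := ℝ) (by rw [hF]; fun_prop)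
  have hF0 : F 0 = 0 := by simp [hF]
  have hF1 : F 1 = 0 := by simp [hF]
  have hFc : F c = 0 := by simp [hF]
  refine ⟨hFc, ?_, fun f hf => ⟨tendsto_right_of_pos_on_Ioo hlip hFc hF1 ?_ hf,
    tendsto_left_of_neg_on_Ioo hlip hF0 hFc ?_ hf⟩⟩
  · rw [hF, (hasDerivAt_cubic_at_root κ c).deriv]
    have : 0 < 1 - c := sub_pos.2 hc1
    positivity
  · rintro x ⟨hcx, hx1⟩
    have : 0 < x := hc0.trans hcx
    have : 0 < 1 - x := sub_pos.2 hx1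
    have : 0 < x - c := sub_pos.2 hcx
    simp only [hF]
    positivity
  · rintro x ⟨hx0, hxc⟩
    have : 0 < 1 - x := sub_pos.2 (hxc.trans hc1)
    have : 0 < κ * x * (1 - x) := by positivity
    simp only [hF]
    exact mul_neg_of_pos_of_neg this (sub_neg.2 hxc)

/-- Bistability: for `k ≥ 3`, `u > 0` and `|λ| < u(1 - 2/k)`, the interior
equilibrium `x̃ = λ/(2u(1-2/k)) + 1/2` lies strictly in `(0,1)`, is an unstable
equilibrium (`F(x̃) = 0`, `F'(x̃) > 0`), and separates the basins of attraction
of `0` and `1`: solutions of `ẋ = F(x)` with `x(0) ∈ (x̃,1)` converge to `1`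
and solutions with `x(0) ∈ (0,x̃)` converge to `0`. -/
theorem interior_equilibrium_separatrix
    (α N u lam : ℝ) (hα : 0 < α) (hN : 0 < N) (hu : 0 < u)
    (k : ℕ) (hk : 3 ≤ k)
    (hlam : |lam| < u * (1 - 2 / (k : ℝ)))
    (F : ℝ → ℝ)
    (hF : F = fun x => (α / N) * x * (x - 1) *
      (2 * u * ((-(k : ℝ) + 3 - 2 / (k : ℝ)) * x - 1 + 1 / (k : ℝ))
        + (lam + u) * ((k : ℝ) - 1)))
    (xt : ℝ) (hxt : xt = lam / (2 * u * (1 - 2 / (k : ℝ))) + 1 / 2) :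
    xt ∈ Set.Ioo (0:ℝ) 1 ∧ F xt = 0 ∧ 0 < deriv F xt ∧
    (∀ f : ℝ → ℝ, (∀ t, HasDerivAt f (F (f t)) t) →
      (f 0 ∈ Set.Ioo xt 1 → Tendsto f atTop (nhds 1)) ∧
      (f 0 ∈ Set.Ioo 0 xt → Tendsto f atTop (nhds 0))) := by
  have hk3 : (3 : ℝ) ≤ k := by exact_mod_cast hk
  have hgap : 0 < 1 - 2 / (k : ℝ) := by
    rw [sub_pos, div_lt_one (by linarith)]; linarith
  have hscale : 0 < 2 * u * (1 - 2 / (k : ℝ)) := by positivity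
  have hxt_mem : xt ∈ Ioo (0 : ℝ) 1 := by
    obtain ⟨hlo, hhi⟩ := abs_lt.1 hlam
    rw [hxt]
    constructor
    · have : -(1 / 2) < lam / (2 * u * (1 - 2 / (k : ℝ))) := by
        rw [lt_div_iff₀ hscale]; linarith
      linarith
    · have : lam / (2 * u * (1 - 2 / (k : ℝ))) < 1 / 2 := by
        rw [div_lt_iff₀ hscale]; linarith
      linarith
  have hcubic :
      F = fun x => α / N * (2 * u * (k - 1) * (1 - 2 / k)) * x * (1 - x) * (x - xt) := by
    have hk0 : (k : ℝ) ≠ 0 := by positivity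
    have hk2 : (k : ℝ) - 2 ≠ 0 := by linarith
    rw [hF, hxt]
    funext x
    field_simp
    ring
  have hk1 : (0 : ℝ) < k - 1 := by linarith
  exact ⟨hxt_mem, bistable_of_eq_cubic (by positivity) hxt_mem hcubic⟩
end
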